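/- Let $\pi$ be a coupling of compactly supported $\mu_0 \in \mathcal{P}(\mathbb{R}^{d_0})$, $\mu_1 \in \mathcal{P}(\mathbb{R}^{d_1})$ and let $\pi_\ell$ be its block approximation at scale $\ell > 0$. Then the KL divergence of $\pi_\ell$ with respect to $\mu_0\otimes\mu_1$ satisfies $\mathsf{D}_{\mathsf{KL}}(\pi_\ell \| \mu_0\otimes\mu_1) \le -\sum_{q\in\mathbb{Z}^{d_0}} \mu_0(H_{0,q,\ell})\log\mu_0(H_{0,q,\ell}) - \sum_{q'\in\mathbb{Z}^{d_1}} \mu_1(H_{1,q',\ell})\log\mu_1(H_{1,q',\ell})$, i.e., it is bounded by the sum of the Shannon entropies of the discretized marginals. -/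

import Mathlib

open MeasureTheory ENNReal

/-- The half-open hypercube of side `ℓ` indexed by `q ∈ ℤ^d`. -/
def gridCube {d : ℕ} (ℓ : ℝ) (q : Fin d → ℤ) : Set (EuclideanSpace ℝ (Fin d)) :=
  {x | ∀ m, (q m : ℝ) * ℓ ≤ x m ∧ x m < ((q m : ℝ) + 1) * ℓ}

/-- The block approximation of a coupling `π` of `(μ0, μ1)` at scale `ℓ` (with `0/0 = 0`). -/
noncomputable def blockApprox {d0 d1 : ℕ}
    (μ0 : Measure (EuclideanSpace ℝ (Fin d0))) (μ1 : Measure (EuclideanSpace ℝ (Fin d1)))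
    (π : Measure (EuclideanSpace ℝ (Fin d0) × EuclideanSpace ℝ (Fin d1))) (ℓ : ℝ) :
    Measure (EuclideanSpace ℝ (Fin d0) × EuclideanSpace ℝ (Fin d1)) :=
  Measure.sum fun qq : (Fin d0 → ℤ) × (Fin d1 → ℤ) =>
    (π (gridCube ℓ qq.1 ×ˢ gridCube ℓ qq.2) / (μ0 (gridCube ℓ qq.1) * μ1 (gridCube ℓ qq.2)))
      • ((μ0.restrict (gridCube ℓ qq.1)).prod (μ1.restrict (gridCube ℓ qq.2)))

open Classical in
/-- Kullback–Leibler divergence `D_KL(ν‖μ)`, `+∞` unless `ν ≪ μ` with integrable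
log-likelihood ratio. -/
noncomputable def klDiv {α : Type*} [MeasurableSpace α] (ν μ : Measure α) : ℝ≥0∞ :=
  if ν ≪ μ ∧ Integrable (llr ν μ) ν then ENNReal.ofReal (∫ x, llr ν μ x ∂ν) else ⊤

/-! On the block `Q × Q'` the block approximation has the constant density
`π(Q × Q') / (μ0(Q) μ1(Q'))` with respect to `μ0 ⊗ μ1`, and it gives the block the same mass
`π(Q × Q')` as `π`. Pushing everything forward along the cube-index map, the divergence becomes
the discrete integral of `log (P{(q,q')} / (p0{q} p1{q'}))` against the discretised coupling `P`
with marginals `p0`, `p1`. Since `P{(q,q')} ≤ 1`, the integrand is at most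
`-log p0{q} - log p1{q'}`, whose integral is the sum of the two discrete entropies. Compact
support leaves only finitely many charged cubes, which makes every integral a finite sum. -/

section MeasureLemmas

variable {α : Type*} [MeasurableSpace α]

theorem measure_singleton_le_map_singleton {β : Type*} [MeasurableSpace β] {μ : Measure α}
    {f : α → β} (hf : AEMeasurable f μ) (x : α) : μ {x} ≤ μ.map f {f x} :=
  (measure_mono (Set.singleton_subset_iff.mpr rfl : {x} ⊆ f ⁻¹' {f x})).trans
    (Measure.le_map_apply hf {f x})

theorem measure_prod_le_map_fst {β : Type*} [MeasurableSpace β]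
    (π : Measure (α × β)) (s : Set α) (t : Set β) : π (s ×ˢ t) ≤ π.map Prod.fst s :=
  (measure_mono (Set.prod_subset_preimage_fst s t)).trans
    (Measure.le_map_apply measurable_fst.aemeasurable s)

theorem measure_prod_le_map_snd {β : Type*} [MeasurableSpace β]
    (π : Measure (α × β)) (s : Set α) (t : Set β) : π (s ×ˢ t) ≤ π.map Prod.snd t :=
  (measure_mono (Set.prod_subset_preimage_snd s t)).trans
    (Measure.le_map_apply measurable_snd.aemeasurable t)

theorem finite_setOf_measure_singleton_ne_zero_of_map {β : Type*} [MeasurableSpace β]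
    {P : Measure (α × β)} (h₀ : {i | P.map Prod.fst {i} ≠ 0}.Finite)
    (h₁ : {j | P.map Prod.snd {j} ≠ 0}.Finite) : {x | P {x} ≠ 0}.Finite :=
  (h₀.prod h₁).subset fun x hx =>
    ⟨((pos_iff_ne_zero.mpr hx).trans_le
        (measure_singleton_le_map_singleton measurable_fst.aemeasurable x)).ne',
      ((pos_iff_ne_zero.mpr hx).trans_le
        (measure_singleton_le_map_singleton measurable_snd.aemeasurable x)).ne'⟩

theorem map_fst_map_prodMap {β γ δ : Type*} [MeasurableSpace β] [MeasurableSpace γ]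
    [MeasurableSpace δ] {f : α → γ} {g : β → δ} (hf : Measurable f) (hg : Measurable g)
    (μ : Measure (α × β)) : (μ.map (Prod.map f g)).map Prod.fst = (μ.map Prod.fst).map f := by
  rw [Measure.map_map measurable_fst (hf.prodMap hg), Measure.map_map hf measurable_fst]
  rfl

theorem map_snd_map_prodMap {β γ δ : Type*} [MeasurableSpace β] [MeasurableSpace γ]
    [MeasurableSpace δ] {f : α → γ} {g : β → δ} (hf : Measurable f) (hg : Measurable g)
    (μ : Measure (α × β)) : (μ.map (Prod.map f g)).map Prod.snd = (μ.map Prod.snd).map g := by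
  rw [Measure.map_map measurable_snd (hf.prodMap hg), Measure.map_map hg measurable_snd]
  rfl

variable [MeasurableSingletonClass α] [Countable α]

theorem integrable_of_finite_setOf_measure_singleton_ne_zero {μ : Measure α} [IsFiniteMeasure μ]
    (hμ : {x | μ {x} ≠ 0}.Finite) (f : α → ℝ) : Integrable f μ := by
  obtain ⟨C, hC⟩ := (hμ.image fun x => ‖f x‖).bddAbove
  refine (integrable_const C).mono' (measurable_of_countable f).aestronglyMeasurable ?_
  rw [ae_iff_of_countable]
  exact fun x hx => hC ⟨x, hx, rfl⟩

theorem integral_neg_log_measureReal_singleton {μ : Measure α} [IsFiniteMeasure μ]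
    (hμ : {x | μ {x} ≠ 0}.Finite) :
    ∫ x, -Real.log (μ.real {x}) ∂μ = ∑' x, Real.negMulLog (μ.real {x}) := by
  rw [integral_countable (integrable_of_finite_setOf_measure_singleton_ne_zero hμ _)]
  simp only [Real.negMulLog, smul_eq_mul, neg_mul, mul_neg]

theorem log_div_mul_le_neg_log_add_neg_log {r a b : ℝ} (hr : 0 < r) (hr1 : r ≤ 1) (ha : 0 < a)
    (hb : 0 < b) : Real.log (r / (a * b)) ≤ -Real.log a + -Real.log b := by
  rw [Real.log_div hr.ne' (mul_pos ha hb).ne', Real.log_mul ha.ne' hb.ne']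
  linarith [Real.log_nonpos hr.le hr1]

variable {β : Type*} [MeasurableSpace β] [MeasurableSingletonClass β] [Countable β]

theorem integral_log_div_le_entropy_add_entropy {P : Measure (α × β)} [IsProbabilityMeasure P]
    {p₀ : Measure α} {p₁ : Measure β} (hP₀ : P.map Prod.fst = p₀)
    (hP₁ : P.map Prod.snd = p₁)
    (hp₀ : {i | p₀ {i} ≠ 0}.Finite) (hp₁ : {j | p₁ {j} ≠ 0}.Finite) :
    ∫ x, Real.log (P {x} / (p₀ {x.1} * p₁ {x.2})).toReal ∂P
      ≤ ∑' i, Real.negMulLog (p₀.real {i}) + ∑' j, Real.negMulLog (p₁.real {j}) := by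
  have : IsFiniteMeasure p₀ := hP₀ ▸ Measure.isFiniteMeasure_map P Prod.fst
  have : IsFiniteMeasure p₁ := hP₁ ▸ Measure.isFiniteMeasure_map P Prod.snd
  have hle₀ (x : α × β) : P {x} ≤ p₀ {x.1} :=
    hP₀ ▸ measure_singleton_le_map_singleton measurable_fst.aemeasurable x
  have hle₁ (x : α × β) : P {x} ≤ p₁ {x.2} :=
    hP₁ ▸ measure_singleton_le_map_singleton measurable_snd.aemeasurable x
  have hint := integrable_of_finite_setOf_measure_singleton_ne_zero
    (finite_setOf_measure_singleton_ne_zero_of_map (hP₀ ▸ hp₀) (hP₁ ▸ hp₁))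
  have hbound : ∀ᵐ x ∂P, Real.log (P {x} / (p₀ {x.1} * p₁ {x.2})).toReal
      ≤ -Real.log (p₀.real {x.1}) + -Real.log (p₁.real {x.2}) := by
    rw [ae_iff_of_countable]
    intro x hx
    have hpos := pos_iff_ne_zero.mpr hx
    rw [ENNReal.toReal_div, ENNReal.toReal_mul]
    exact log_div_mul_le_neg_log_add_neg_log (ENNReal.toReal_pos hx (measure_ne_top _ _))
      (ENNReal.toReal_le_of_le_ofReal zero_le_one (by simpa using prob_le_one (s := {x})))
      (ENNReal.toReal_pos (hpos.trans_le (hle₀ x)).ne' (measure_ne_top _ _))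
      (ENNReal.toReal_pos (hpos.trans_le (hle₁ x)).ne' (measure_ne_top _ _))
  calc _ ≤ ∫ x, -Real.log (p₀.real {x.1}) + -Real.log (p₁.real {x.2}) ∂P :=
        integral_mono_ae (hint _) (hint _) hbound
    _ = ∫ i, -Real.log (p₀.real {i}) ∂P.map Prod.fst
          + ∫ j, -Real.log (p₁.real {j}) ∂P.map Prod.snd := by
        rw [integral_add (hint _) (hint _), integral_map measurable_fst.aemeasurable
          (measurable_of_countable _).aestronglyMeasurable, integral_map
          measurable_snd.aemeasurable (measurable_of_countable _).aestronglyMeasurable]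
    _ = _ := by
        rw [hP₀, hP₁, integral_neg_log_measureReal_singleton hp₀,
          integral_neg_log_measureReal_singleton hp₁]

end MeasureLemmas

noncomputable def cubeIdx (ℓ : ℝ) {d : ℕ} (x : EuclideanSpace ℝ (Fin d)) : Fin d → ℤ :=
  fun m => ⌊x m / ℓ⌋

section Grid

variable {d : ℕ} {ℓ : ℝ}

theorem preimage_cubeIdx_singleton (hℓ : 0 < ℓ) (q : Fin d → ℤ) :
    cubeIdx ℓ ⁻¹' {q} = gridCube ℓ q := by
  ext x
  simp only [Set.mem_preimage, Set.mem_singleton_iff, cubeIdx, funext_iff, Int.floor_eq_iff,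
    le_div_iff₀ hℓ, div_lt_iff₀ hℓ]
  rfl

theorem measurable_cubeIdx (ℓ : ℝ) : Measurable (cubeIdx ℓ (d := d)) :=
  measurable_pi_lambda _ fun m =>
    (((measurable_pi_apply m).comp (WithLp.measurable_ofLp 2 (Fin d → ℝ))).div_const ℓ).floor

theorem measurableSet_gridCube (hℓ : 0 < ℓ) (q : Fin d → ℤ) :
    MeasurableSet (gridCube ℓ q) :=
  preimage_cubeIdx_singleton hℓ q ▸ measurable_cubeIdx ℓ (measurableSet_singleton q)

theorem map_cubeIdx_singleton (hℓ : 0 < ℓ) (μ : Measure (EuclideanSpace ℝ (Fin d)))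
    (q : Fin d → ℤ) : μ.map (cubeIdx ℓ) {q} = μ (gridCube ℓ q) := by
  rw [Measure.map_apply (measurable_cubeIdx ℓ) (measurableSet_singleton q),
    preimage_cubeIdx_singleton hℓ]

theorem finite_cubeIdx_image_of_isBounded (hℓ : 0 < ℓ) {K : Set (EuclideanSpace ℝ (Fin d))}
    (hK : Bornology.IsBounded K) : (cubeIdx ℓ '' K).Finite := by
  obtain ⟨R, hR⟩ := hK.subset_closedBall 0
  refine (Set.Finite.pi fun _ => Set.finite_Icc ⌊-R / ℓ⌋ ⌊R / ℓ⌋).subset ?_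
  rintro _ ⟨x, hxK, rfl⟩ m -
  have hx : |x m| ≤ R :=
    ((PiLp.norm_apply_le x m).trans (mem_closedBall_zero_iff.mp (hR hxK)))
  exact ⟨Int.floor_le_floor (by gcongr; exact (abs_le.mp hx).1),
    Int.floor_le_floor (by gcongr; exact (abs_le.mp hx).2)⟩

theorem finite_setOf_map_cubeIdx_singleton_ne_zero (hℓ : 0 < ℓ)
    {μ : Measure (EuclideanSpace ℝ (Fin d))} (hμ : ∃ K, IsCompact K ∧ μ Kᶜ = 0) :
    {q | μ.map (cubeIdx ℓ) {q} ≠ 0}.Finite := by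
  obtain ⟨K, hK, hKc⟩ := hμ
  refine (finite_cubeIdx_image_of_isBounded hℓ hK.isBounded).subset fun q hq => ?_
  rw [Set.mem_ofPred_eq, Measure.map_apply (measurable_cubeIdx ℓ) (measurableSet_singleton q)]
    at hq
  obtain ⟨x, hxq, hxK⟩ : (cubeIdx ℓ ⁻¹' {q} ∩ K).Nonempty := by
    by_contra h
    rw [Set.not_nonempty_iff_eq_empty, ← Set.disjoint_iff_inter_eq_empty] at h
    exact hq (measure_mono_null h.subset_compl_right hKc)
  exact ⟨x, hxK, hxq⟩

end Grid

section Block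

variable {d0 d1 : ℕ} {μ0 : Measure (EuclideanSpace ℝ (Fin d0))}
  {μ1 : Measure (EuclideanSpace ℝ (Fin d1))}
  {π : Measure (EuclideanSpace ℝ (Fin d0) × EuclideanSpace ℝ (Fin d1))} {ℓ : ℝ}

variable (μ0 μ1 π ℓ) in
noncomputable def blockCoef (qq : (Fin d0 → ℤ) × (Fin d1 → ℤ)) : ℝ≥0∞ :=
  π (gridCube ℓ qq.1 ×ˢ gridCube ℓ qq.2)
    / (μ0 (gridCube ℓ qq.1) * μ1 (gridCube ℓ qq.2))

theorem measurable_prodMap_cubeIdx (ℓ : ℝ) :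
    Measurable (Prod.map (cubeIdx ℓ) (cubeIdx ℓ) :
      EuclideanSpace ℝ (Fin d0) × EuclideanSpace ℝ (Fin d1) → _) :=
  (measurable_cubeIdx ℓ).prodMap (measurable_cubeIdx ℓ)

theorem preimage_prodMap_cubeIdx_singleton (hℓ : 0 < ℓ)
    (qq : (Fin d0 → ℤ) × (Fin d1 → ℤ)) :
    (Prod.map (cubeIdx ℓ) (cubeIdx ℓ) ⁻¹' {qq} :
      Set (EuclideanSpace ℝ (Fin d0) × EuclideanSpace ℝ (Fin d1)))
      = gridCube ℓ qq.1 ×ˢ gridCube ℓ qq.2 := by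
  rw [← Set.singleton_prod_singleton, Set.preimage_prod_map_prod,
    preimage_cubeIdx_singleton hℓ, preimage_cubeIdx_singleton hℓ]

theorem measurableSet_gridCube_prod (hℓ : 0 < ℓ) (qq : (Fin d0 → ℤ) × (Fin d1 → ℤ)) :
    MeasurableSet (gridCube ℓ qq.1 ×ˢ gridCube ℓ qq.2) :=
  (measurableSet_gridCube hℓ qq.1).prod (measurableSet_gridCube hℓ qq.2)

theorem blockApprox_eq_withDensity (hℓ : 0 < ℓ) [SFinite μ0] [SFinite μ1] :
    blockApprox μ0 μ1 π ℓ = (μ0.prod μ1).withDensity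
      (blockCoef μ0 μ1 π ℓ ∘ Prod.map (cubeIdx ℓ) (cubeIdx ℓ)) := by
  classical
  have hdens : blockCoef μ0 μ1 π ℓ ∘ Prod.map (cubeIdx ℓ) (cubeIdx ℓ) =
      ∑' qq, (gridCube ℓ qq.1 ×ˢ gridCube ℓ qq.2).indicator
        fun _ => blockCoef μ0 μ1 π ℓ qq := by
    ext p
    simp only [ENNReal.tsum_apply, ← preimage_prodMap_cubeIdx_singleton hℓ, Set.indicator_apply,
      Set.mem_preimage, Set.mem_singleton_iff, eq_comm (a := Prod.map _ _ p), tsum_ite_eq]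
    rfl
  rw [hdens, withDensity_tsum fun qq => measurable_const.indicator
    (measurableSet_gridCube_prod hℓ qq), blockApprox]
  congr 1 with qq : 1
  rw [withDensity_indicator (measurableSet_gridCube_prod hℓ qq), withDensity_const,
    ← Measure.prod_restrict]
  rfl


theorem blockCoef_mul_measure_eq (hπ0 : π.map Prod.fst = μ0) (hπ1 : π.map Prod.snd = μ1)
    [IsFiniteMeasure μ0] [IsFiniteMeasure μ1] (qq : (Fin d0 → ℤ) × (Fin d1 → ℤ)) :
    blockCoef μ0 μ1 π ℓ qq * (μ0 (gridCube ℓ qq.1) * μ1 (gridCube ℓ qq.2))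
      = π (gridCube ℓ qq.1 ×ˢ gridCube ℓ qq.2) := by
  rcases eq_or_ne (μ0 (gridCube ℓ qq.1) * μ1 (gridCube ℓ qq.2)) 0 with h | h
  · have hπ : π (gridCube ℓ qq.1 ×ˢ gridCube ℓ qq.2) = 0 := by
      rcases mul_eq_zero.mp h with h | h
      · exact le_zero_iff.mp ((measure_prod_le_map_fst π _ _).trans (hπ0 ▸ h.le))
      · exact le_zero_iff.mp ((measure_prod_le_map_snd π _ _).trans (hπ1 ▸ h.le))
    rw [h, hπ, mul_zero]
  · exact ENNReal.div_mul_cancel h (ENNReal.mul_ne_top (measure_ne_top _ _) (measure_ne_top _ _))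

theorem map_prodMap_cubeIdx_blockApprox (hℓ : 0 < ℓ) [IsFiniteMeasure μ0] [IsFiniteMeasure μ1]
    (hπ0 : π.map Prod.fst = μ0) (hπ1 : π.map Prod.snd = μ1) :
    (blockApprox μ0 μ1 π ℓ).map (Prod.map (cubeIdx ℓ) (cubeIdx ℓ))
      = π.map (Prod.map (cubeIdx ℓ) (cubeIdx ℓ)) := by
  refine Measure.ext_of_singleton fun qq => ?_
  have hQ := measurable_prodMap_cubeIdx (d0 := d0) (d1 := d1) ℓ (measurableSet_singleton qq)
  rw [Measure.map_apply (measurable_prodMap_cubeIdx ℓ) (measurableSet_singleton qq),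
    Measure.map_apply (measurable_prodMap_cubeIdx ℓ) (measurableSet_singleton qq),
    blockApprox_eq_withDensity hℓ, withDensity_apply _ hQ,
    setLIntegral_congr_fun hQ (g := fun _ => blockCoef μ0 μ1 π ℓ qq)
      (f := blockCoef μ0 μ1 π ℓ ∘ Prod.map (cubeIdx ℓ) (cubeIdx ℓ))
      fun p hp => congrArg (blockCoef μ0 μ1 π ℓ) hp, setLIntegral_const,
    preimage_prodMap_cubeIdx_singleton hℓ, Measure.prod_prod, blockCoef_mul_measure_eq hπ0 hπ1]

theorem blockCoef_eq_map (hℓ : 0 < ℓ) (qq : (Fin d0 → ℤ) × (Fin d1 → ℤ)) :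
    blockCoef μ0 μ1 π ℓ qq = π.map (Prod.map (cubeIdx ℓ) (cubeIdx ℓ)) {qq}
      / (μ0.map (cubeIdx ℓ) {qq.1} * μ1.map (cubeIdx ℓ) {qq.2}) := by
  rw [map_cubeIdx_singleton hℓ, map_cubeIdx_singleton hℓ,
    Measure.map_apply (measurable_prodMap_cubeIdx ℓ) (measurableSet_singleton qq),
    preimage_prodMap_cubeIdx_singleton hℓ]
  rfl

theorem blockApprox_absolutelyContinuous (hℓ : 0 < ℓ) [SFinite μ0] [SFinite μ1] :
    blockApprox μ0 μ1 π ℓ ≪ μ0.prod μ1 := by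
  rw [blockApprox_eq_withDensity hℓ]
  exact withDensity_absolutelyContinuous _ _

theorem llr_blockApprox_ae_eq (hℓ : 0 < ℓ) [SigmaFinite μ0] [SigmaFinite μ1] :
    llr (blockApprox μ0 μ1 π ℓ) (μ0.prod μ1) =ᵐ[blockApprox μ0 μ1 π ℓ] fun p =>
      Real.log (blockCoef μ0 μ1 π ℓ (Prod.map (cubeIdx ℓ) (cubeIdx ℓ) p)).toReal := by
  rw [blockApprox_eq_withDensity hℓ]
  filter_upwards [(withDensity_absolutelyContinuous _ _).ae_le (Measure.rnDeriv_withDensity _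
    ((measurable_of_countable _).comp (measurable_prodMap_cubeIdx ℓ)))] with p hp
  rw [llr, hp]
  rfl

theorem map_fst_map_prodMap_cubeIdx (hπ0 : π.map Prod.fst = μ0) :
    (π.map (Prod.map (cubeIdx ℓ) (cubeIdx ℓ))).map Prod.fst = μ0.map (cubeIdx ℓ) :=
  hπ0 ▸ map_fst_map_prodMap (measurable_cubeIdx ℓ) (measurable_cubeIdx ℓ) π

theorem map_snd_map_prodMap_cubeIdx (hπ1 : π.map Prod.snd = μ1) :
    (π.map (Prod.map (cubeIdx ℓ) (cubeIdx ℓ))).map Prod.snd = μ1.map (cubeIdx ℓ) :=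
  hπ1 ▸ map_snd_map_prodMap (measurable_cubeIdx ℓ) (measurable_cubeIdx ℓ) π

theorem integral_llr_blockApprox (hℓ : 0 < ℓ) [IsFiniteMeasure μ0] [IsFiniteMeasure μ1]
    (hπ0 : π.map Prod.fst = μ0) (hπ1 : π.map Prod.snd = μ1) :
    ∫ p, llr (blockApprox μ0 μ1 π ℓ) (μ0.prod μ1) p ∂blockApprox μ0 μ1 π ℓ
      = ∫ qq, Real.log (blockCoef μ0 μ1 π ℓ qq).toReal
          ∂π.map (Prod.map (cubeIdx ℓ) (cubeIdx ℓ)) := by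
  rw [integral_congr_ae (llr_blockApprox_ae_eq hℓ),
    ← map_prodMap_cubeIdx_blockApprox hℓ hπ0 hπ1,
    integral_map (measurable_prodMap_cubeIdx ℓ).aemeasurable
      (measurable_of_countable _).aestronglyMeasurable]

theorem integrable_llr_blockApprox (hℓ : 0 < ℓ) [IsFiniteMeasure μ0] [IsFiniteMeasure μ1]
    [IsFiniteMeasure π] (hc0 : ∃ K, IsCompact K ∧ μ0 Kᶜ = 0)
    (hc1 : ∃ K, IsCompact K ∧ μ1 Kᶜ = 0)
    (hπ0 : π.map Prod.fst = μ0) (hπ1 : π.map Prod.snd = μ1) :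
    Integrable (llr (blockApprox μ0 μ1 π ℓ) (μ0.prod μ1)) (blockApprox μ0 μ1 π ℓ) := by
  have hfin0 := finite_setOf_map_cubeIdx_singleton_ne_zero hℓ hc0
  have hfin1 := finite_setOf_map_cubeIdx_singleton_ne_zero hℓ hc1
  rw [← map_fst_map_prodMap_cubeIdx hπ0] at hfin0
  rw [← map_snd_map_prodMap_cubeIdx hπ1] at hfin1
  have hg := measurable_of_countable fun qq => Real.log (blockCoef μ0 μ1 π ℓ qq).toReal
  refine (integrable_congr (llr_blockApprox_ae_eq hℓ)).mpr ((integrable_map_measure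
    hg.aestronglyMeasurable (measurable_prodMap_cubeIdx ℓ).aemeasurable).mp ?_)
  rw [map_prodMap_cubeIdx_blockApprox hℓ hπ0 hπ1]
  exact integrable_of_finite_setOf_measure_singleton_ne_zero
    (finite_setOf_measure_singleton_ne_zero_of_map hfin0 hfin1) _

end Block

/-- The KL divergence of the block approximation with respect to `μ0 ⊗ μ1` is bounded by the
sum of the Shannon entropies of the discretized marginals. -/
theorem blockApprox_klDiv_le_entropy {d0 d1 : ℕ}
    (μ0 : Measure (EuclideanSpace ℝ (Fin d0))) (μ1 : Measure (EuclideanSpace ℝ (Fin d1)))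
    [IsProbabilityMeasure μ0] [IsProbabilityMeasure μ1]
    (hc0 : ∃ K : Set (EuclideanSpace ℝ (Fin d0)), IsCompact K ∧ μ0 Kᶜ = 0)
    (hc1 : ∃ K : Set (EuclideanSpace ℝ (Fin d1)), IsCompact K ∧ μ1 Kᶜ = 0)
    (π : Measure (EuclideanSpace ℝ (Fin d0) × EuclideanSpace ℝ (Fin d1)))
    [IsProbabilityMeasure π]
    (hπ0 : π.map Prod.fst = μ0) (hπ1 : π.map Prod.snd = μ1)
    (ℓ : ℝ) (hℓ : 0 < ℓ) :
    klDiv (blockApprox μ0 μ1 π ℓ) (μ0.prod μ1)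
      ≤ ENNReal.ofReal
        ((∑' q : Fin d0 → ℤ,
            -((μ0 (gridCube ℓ q)).toReal * Real.log (μ0 (gridCube ℓ q)).toReal))
          + ∑' q' : Fin d1 → ℤ,
            -((μ1 (gridCube ℓ q')).toReal * Real.log (μ1 (gridCube ℓ q')).toReal)) := by
  rw [klDiv, if_pos ⟨blockApprox_absolutelyContinuous hℓ,
    integrable_llr_blockApprox hℓ hc0 hc1 hπ0 hπ1⟩, integral_llr_blockApprox hℓ hπ0 hπ1]
  refine ENNReal.ofReal_le_ofReal ?_
  have := Measure.isProbabilityMeasure_map (μ := π) (measurable_prodMap_cubeIdx ℓ).aemeasurable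
  simp only [blockCoef_eq_map hℓ]
  convert integral_log_div_le_entropy_add_entropy
    (map_fst_map_prodMap_cubeIdx hπ0) (map_snd_map_prodMap_cubeIdx hπ1)
    (finite_setOf_map_cubeIdx_singleton_ne_zero hℓ hc0)
    (finite_setOf_map_cubeIdx_singleton_ne_zero hℓ hc1) using 1
  simp only [measureReal_def, map_cubeIdx_singleton hℓ, Real.negMulLog, neg_mul]
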